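/- arXiv:1808.09365 — 2 statements merged into one kernel-verified Lean document; each statement's English description precedes it below -/
import Mathlib

section
/- Let n and m be positive integers, let q be a positive integer, let a = (a_1, ..., a_n) ∈ ℤ^n and b ∈ ℤ. Let C = { x ∈ (ℤ_q)^n : a_1 x_1 + ... + a_n x_n ≡ b (mod m) } be the linear-congruence code, where ℤ_q = {0, 1, ..., q−1} ⊂ ℤ. Then for every complex number z, the weight enumerator W_C(z) = Σ_{x ∈ C} z^{wt(x)} satisfies W_C(z) = (1/m) · Σ_{j=1}^{m} e(−jb/m) · Π_{i=1}^{n} ( 1 + z·e(j a_i / m) + z·e(j a_i·2 / m) + ... + z·e(j a_i (q−1) / m) ), where e(α) = exp(2π√−1 · α) and wt(x) is the Hamming weight of x, i.e. the number of indices i with x_i ≠ 0. -/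
open Finset

lemma two_pi_I_ne_zero : (2 * Real.pi * Complex.I : ℂ) ≠ 0 := by
  simp [Real.pi_ne_zero, Complex.I_ne_zero, Complex.ofReal_ne_zero]

lemma char_sum (m : ℕ) (hm : 0 < m) (c : ℤ) :
    ∑ j ∈ Finset.Icc 1 m,
        Complex.exp (2 * Real.pi * Complex.I * ((j : ℂ) * (c : ℂ) / (m : ℂ))) =
      if (m : ℤ) ∣ c then (m : ℂ) else 0 := by
  have hm' : (m : ℂ) ≠ 0 := Nat.cast_ne_zero.mpr hm.ne'
  set ζ : ℂ := Complex.exp (2 * Real.pi * Complex.I * ((c : ℂ) / (m : ℂ))) with hζ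
  have hpow : ∀ j : ℕ,
      Complex.exp (2 * Real.pi * Complex.I * ((j : ℂ) * (c : ℂ) / (m : ℂ))) = ζ ^ j := by
    intro j
    rw [hζ, ← Complex.exp_nat_mul]
    ring_nf
  have hζm : ζ ^ m = 1 := by
    rw [hζ, ← Complex.exp_nat_mul]
    have h : (m : ℂ) * (2 * Real.pi * Complex.I * ((c : ℂ) / (m : ℂ)))
        = (c : ℂ) * (2 * Real.pi * Complex.I) := by field_simp
    rw [h]
    exact_mod_cast Complex.exp_int_mul_two_pi_mul_I c
  have hζ1 : ζ = 1 ↔ (m : ℤ) ∣ c := by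
    rw [hζ, Complex.exp_eq_one_iff]
    constructor
    · rintro ⟨k, hk⟩
      refine ⟨k, ?_⟩
      have hdiv : (c : ℂ) / (m : ℂ) = (k : ℂ) :=
        mul_left_cancel₀ two_pi_I_ne_zero (by rw [hk]; ring)
      have hc : (c : ℂ) = (m : ℂ) * (k : ℂ) := by
        field_simp at hdiv; linear_combination hdiv
      exact_mod_cast hc
    · rintro ⟨k, rfl⟩
      exact ⟨k, by push_cast; field_simp⟩
  simp only [hpow]
  have hshift : ∑ j ∈ Finset.Icc 1 m, ζ ^ j = ζ * ∑ j ∈ Finset.range m, ζ ^ j := by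
    rw [← Finset.Ico_add_one_right_eq_Icc, Finset.sum_Ico_eq_sum_range, Finset.mul_sum]
    simp [pow_add, pow_succ, mul_comm]
  rw [hshift]
  by_cases h1 : ζ = 1
  · simp [h1, hζ1.mp h1]
  · have : (∑ j ∈ Finset.range m, ζ ^ j) * (ζ - 1) = 0 := by
      rw [geom_sum_mul, hζm, sub_self]
    have hsum : ∑ j ∈ Finset.range m, ζ ^ j = 0 := by
      rcases mul_eq_zero.mp this with h | h
      · exact h
      · exact absurd (sub_eq_zero.mp h) h1
    have hnd : ¬ (m : ℤ) ∣ c := fun hd => h1 (hζ1.mpr hd)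
    simp [hsum, hnd]

/-- weight enumerator of a linear-congruence code over `ℤ_q`. -/
theorem weight_enumerator_linear_congruence_code
    (n m q : ℕ) (hn : 0 < n) (hm : 0 < m) (hq : 0 < q)
    (a : Fin n → ℤ) (b : ℤ) (z : ℂ)
    (C : Finset (Fin n → Fin q))
    (hC : C = Finset.univ.filter
      (fun x => (∑ i, a i * ((x i : ℕ) : ℤ)) ≡ b [ZMOD (m : ℤ)])) :
    (∑ x ∈ C, z ^ (Finset.univ.filter (fun i => (x i : ℕ) ≠ 0)).card) =
      (1 / (m : ℂ)) * ∑ j ∈ Finset.Icc 1 m,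
        Complex.exp (2 * Real.pi * Complex.I * (-((j : ℂ) * (b : ℂ)) / (m : ℂ))) *
        ∏ i, ∑ k ∈ Finset.range q,
          (if k = 0 then 1 else z) *
            Complex.exp (2 * Real.pi * Complex.I *
              ((j : ℂ) * (a i : ℂ) * (k : ℂ) / (m : ℂ))) := by
  have hm' : (m : ℂ) ≠ 0 := Nat.cast_ne_zero.mpr hm.ne'
  -- rewrite the inner product as a sum over all words x
  have hprod : ∀ j ∈ Finset.Icc 1 m,
      Complex.exp (2 * Real.pi * Complex.I * (-((j : ℂ) * (b : ℂ)) / (m : ℂ))) *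
        (∏ i, ∑ k ∈ Finset.range q,
          (if k = 0 then 1 else z) *
            Complex.exp (2 * Real.pi * Complex.I *
              ((j : ℂ) * (a i : ℂ) * (k : ℂ) / (m : ℂ)))) =
      ∑ x : Fin n → Fin q,
        z ^ (Finset.univ.filter (fun i => (x i : ℕ) ≠ 0)).card *
          Complex.exp (2 * Real.pi * Complex.I *
            ((j : ℂ) * (((∑ i, a i * ((x i : ℕ) : ℤ)) - b : ℤ) : ℂ) / (m : ℂ))) := by
    intro j _
    have h1 : ∀ i : Fin n, (∑ k ∈ Finset.range q,
        (if k = 0 then 1 else z) *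
          Complex.exp (2 * Real.pi * Complex.I *
            ((j : ℂ) * (a i : ℂ) * (k : ℂ) / (m : ℂ)))) =
        ∑ k : Fin q, (if (k : ℕ) = 0 then 1 else z) *
          Complex.exp (2 * Real.pi * Complex.I *
            ((j : ℂ) * (a i : ℂ) * ((k : ℕ) : ℂ) / (m : ℂ))) := by
      intro i
      rw [Fin.sum_univ_eq_sum_range (fun k => (if k = 0 then 1 else z) *
        Complex.exp (2 * Real.pi * Complex.I *
          ((j : ℂ) * (a i : ℂ) * ((k : ℕ) : ℂ) / (m : ℂ))))]
    simp only [h1]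
    rw [Finset.prod_univ_sum, Finset.mul_sum, Fintype.piFinset_univ]
    refine Finset.sum_congr rfl (fun x _ => ?_)
    rw [Finset.prod_mul_distrib, Finset.prod_ite, Finset.prod_const_one,
      Finset.prod_const, one_mul, ← Complex.exp_sum]
    have hsum : (∑ i : Fin n, 2 * (Real.pi : ℂ) * Complex.I *
          ((j : ℂ) * (a i : ℂ) * ((x i : ℕ) : ℂ) / (m : ℂ)))
        = 2 * (Real.pi : ℂ) * Complex.I *
          ((j : ℂ) * (∑ i : Fin n, (a i : ℂ) * ((x i : ℕ) : ℂ)) / (m : ℂ)) := by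
      rw [Finset.mul_sum, Finset.sum_div, Finset.mul_sum]
      exact Finset.sum_congr rfl (fun i _ => by ring)
    rw [hsum, ← mul_assoc, mul_comm (Complex.exp _) (z ^ _), mul_assoc, ← Complex.exp_add]
    congr 2
    · push_cast
      field_simp
      ring
  rw [Finset.sum_congr rfl hprod, Finset.sum_comm, Finset.mul_sum]
  subst hC
  rw [Finset.sum_filter]
  refine Finset.sum_congr rfl (fun x _ => ?_)
  rw [← Finset.mul_sum, char_sum m hm]
  have hiff : ((∑ i, a i * ((x i : ℕ) : ℤ)) ≡ b [ZMOD (m : ℤ)]) ↔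
      (m : ℤ) ∣ ((∑ i, a i * ((x i : ℕ) : ℤ)) - b) := by
    rw [Int.modEq_iff_dvd]
    exact dvd_sub_comm
  by_cases hd : (m : ℤ) ∣ ((∑ i, a i * ((x i : ℕ) : ℤ)) - b)
  · rw [if_pos (hiff.mpr hd), if_pos hd]
    field_simp
  · rw [if_neg (fun h => hd (hiff.mp h)), if_neg hd]
    simp
end

section
/- Let n and m be positive integers, let q be a positive integer, let a = (a_1, ..., a_n) ∈ ℤ^n and b ∈ ℤ, and let C = { x ∈ (ℤ_q)^n : a_1 x_1 + ... + a_n x_n ≡ b (mod m) }. For 0 ≤ i ≤ n let A_i(C) denote the number of codewords x ∈ C whose Hamming weight wt(x) equals i. Then Σ_{i=0}^{n} A_i(C) z^i = (1/m) · Σ_{j=1}^{m} e(−jb/m) · Π_{i=1}^{n} ( 1 + z·e(j a_i / m) + z·e(j a_i·2 / m) + ... + z·e(j a_i (q−1) / m) ) for every complex number z, where e(α) = exp(2π√−1 · α). -/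
lemma exp_sum_div_aux (m : ℕ) (hm : 0 < m) (c : ℤ) :
    ∑ j ∈ Finset.Icc 1 m, Complex.exp (2 * Real.pi * Complex.I * ((j : ℂ) * (c : ℂ) / m)) =
    if ((m : ℤ) ∣ c) then (m : ℂ) else 0 := by
  have hm0 : (m : ℂ) ≠ 0 := Nat.cast_ne_zero.mpr hm.ne'
  set ζ : ℂ := Complex.exp (2 * Real.pi * Complex.I * ((c : ℂ) / m)) with hζ
  have hterm : ∀ j : ℕ, Complex.exp (2 * Real.pi * Complex.I * ((j : ℂ) * (c : ℂ) / m)) = ζ ^ j := by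
    intro j
    rw [hζ, ← Complex.exp_nat_mul]
    ring_nf
  simp only [hterm]
  by_cases hd : (m : ℤ) ∣ c
  · obtain ⟨k, hk⟩ := hd
    have hz1 : ζ = 1 := by
      rw [hζ]
      have h1 : (2 * (Real.pi : ℂ) * Complex.I * ((c : ℂ) / m)) = (k : ℂ) * (2 * Real.pi * Complex.I) := by
        have : (c : ℂ) = (m : ℂ) * k := by exact_mod_cast congrArg (Int.cast : ℤ → ℂ) hk
        rw [this]
        field_simp
      rw [h1, Complex.exp_int_mul_two_pi_mul_I]
    rw [if_pos ⟨k, hk⟩]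
    simp [hz1, Nat.card_Icc]
  · have hζm : ζ ^ m = 1 := by
      rw [hζ, ← Complex.exp_nat_mul]
      have : (m : ℂ) * (2 * Real.pi * Complex.I * ((c : ℂ) / m)) = (c : ℂ) * (2 * Real.pi * Complex.I) := by
        field_simp
      rw [this, Complex.exp_int_mul_two_pi_mul_I]
    have h2 : (2 : ℂ) * Real.pi * Complex.I ≠ 0 := by
      simp [Real.pi_ne_zero, Complex.I_ne_zero, Complex.ofReal_ne_zero]
    have hζ1 : ζ ≠ 1 := by
      intro h
      rw [hζ, Complex.exp_eq_one_iff] at h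
      obtain ⟨k, hk⟩ := h
      apply hd
      refine ⟨k, ?_⟩
      have hck : (c : ℂ) / m = k := by
        rw [mul_comm ((k:ℂ)) _] at hk
        exact mul_left_cancel₀ h2 hk
      have : (c : ℂ) = (m : ℂ) * k := by
        rw [div_eq_iff hm0] at hck; rw [hck]; ring
      exact_mod_cast this
    rw [if_neg hd]
    have hins : Finset.range (m + 1) = insert 0 (Finset.Icc 1 m) := by
      ext x
      simp [Nat.lt_succ_iff]
      omega
    have hgeo : ∑ j ∈ Finset.range (m + 1), ζ ^ j = 1 + ∑ j ∈ Finset.Icc 1 m, ζ ^ j := by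
      rw [hins, Finset.sum_insert (by simp)]
      simp
    have hval : ∑ j ∈ Finset.range (m + 1), ζ ^ j = 1 := by
      rw [geom_sum_eq hζ1, pow_succ, hζm, one_mul]
      rw [div_self (sub_ne_zero.mpr hζ1)]
    rw [hval] at hgeo
    linear_combination -hgeo

/-- weight distribution of a linear-congruence code over `ℤ_q`. -/
theorem weight_distribution_linear_congruence_code
    (n m q : ℕ) (hn : 0 < n) (hm : 0 < m) (hq : 0 < q)
    (a : Fin n → ℤ) (b : ℤ) (z : ℂ)
    (C : Finset (Fin n → Fin q))
    (hC : C = Finset.univ.filter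
      (fun x => (∑ i, a i * ((x i : ℕ) : ℤ)) ≡ b [ZMOD (m : ℤ)]))
    (A : ℕ → ℕ)
    (hA : ∀ i, A i =
      (C.filter (fun x => (Finset.univ.filter (fun t => (x t : ℕ) ≠ 0)).card = i)).card) :
    (∑ i ∈ Finset.range (n + 1), (A i : ℂ) * z ^ i) =
      (1 / (m : ℂ)) * ∑ j ∈ Finset.Icc 1 m,
        Complex.exp (2 * Real.pi * Complex.I * (-((j : ℂ) * (b : ℂ)) / (m : ℂ))) *
        ∏ i, ∑ k ∈ Finset.range q,
          (if k = 0 then 1 else z) *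
            Complex.exp (2 * Real.pi * Complex.I *
              ((j : ℂ) * (a i : ℂ) * (k : ℂ) / (m : ℂ))) := by
  have hm0 : (m : ℂ) ≠ 0 := Nat.cast_ne_zero.mpr hm.ne'
  set w : (Fin n → Fin q) → ℕ := fun x => (Finset.univ.filter (fun t => (x t : ℕ) ≠ 0)).card with hw
  -- Step 1: expand the product over i into a sum over x : Fin n → Fin q
  have hprod : ∀ j : ℕ,
      ∏ i, ∑ k ∈ Finset.range q, (if k = 0 then 1 else z) *
          Complex.exp (2 * Real.pi * Complex.I * ((j : ℂ) * (a i : ℂ) * (k : ℂ) / (m : ℂ)))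
      = ∑ x : Fin n → Fin q, z ^ (w x) *
          Complex.exp (2 * Real.pi * Complex.I *
            ((j : ℂ) * (((∑ i, a i * ((x i : ℕ) : ℤ)) : ℤ) : ℂ) / (m : ℂ))) := by
    intro j
    have h1 : ∀ i : Fin n, ∑ k ∈ Finset.range q, (if k = 0 then 1 else z) *
          Complex.exp (2 * Real.pi * Complex.I * ((j : ℂ) * (a i : ℂ) * (k : ℂ) / (m : ℂ)))
        = ∑ k : Fin q, (if (k : ℕ) = 0 then 1 else z) *
          Complex.exp (2 * Real.pi * Complex.I * ((j : ℂ) * (a i : ℂ) * ((k : ℕ) : ℂ) / (m : ℂ))) := by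
      intro i
      exact (Fin.sum_univ_eq_sum_range _ q).symm
    simp only [h1]
    rw [Finset.prod_univ_sum, Fintype.piFinset_univ]
    refine Finset.sum_congr rfl (fun x _ => ?_)
    rw [Finset.prod_mul_distrib, ← Complex.exp_sum]
    congr 1
    · rw [Finset.prod_ite]
      simp [hw]
    · push_cast
      simp only [Finset.mul_sum, Finset.sum_div]
      exact congrArg Complex.exp (Finset.sum_congr rfl fun i _ => by ring)
  -- Step 2: combine the exponentials and apply the character sum identity
  have hmain : ∑ j ∈ Finset.Icc 1 m,
        Complex.exp (2 * Real.pi * Complex.I * (-((j : ℂ) * (b : ℂ)) / (m : ℂ))) *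
        ∏ i, ∑ k ∈ Finset.range q,
          (if k = 0 then 1 else z) *
            Complex.exp (2 * Real.pi * Complex.I *
              ((j : ℂ) * (a i : ℂ) * (k : ℂ) / (m : ℂ)))
      = ∑ x : Fin n → Fin q, z ^ (w x) *
          (if ((m : ℤ) ∣ (∑ i, a i * ((x i : ℕ) : ℤ)) - b) then (m : ℂ) else 0) := by
    calc ∑ j ∈ Finset.Icc 1 m,
        Complex.exp (2 * Real.pi * Complex.I * (-((j : ℂ) * (b : ℂ)) / (m : ℂ))) *
        ∏ i, ∑ k ∈ Finset.range q,
          (if k = 0 then 1 else z) *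
            Complex.exp (2 * Real.pi * Complex.I *
              ((j : ℂ) * (a i : ℂ) * (k : ℂ) / (m : ℂ)))
        = ∑ j ∈ Finset.Icc 1 m, ∑ x : Fin n → Fin q, z ^ (w x) *
            Complex.exp (2 * Real.pi * Complex.I *
              ((j : ℂ) * ((((∑ i, a i * ((x i : ℕ) : ℤ)) - b : ℤ)) : ℂ) / (m : ℂ))) := by
          refine Finset.sum_congr rfl fun j _ => ?_
          rw [hprod j, Finset.mul_sum]
          refine Finset.sum_congr rfl fun x _ => ?_
          rw [mul_left_comm, ← Complex.exp_add]
          congr 2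
          push_cast
          ring
      _ = ∑ x : Fin n → Fin q, ∑ j ∈ Finset.Icc 1 m, z ^ (w x) *
            Complex.exp (2 * Real.pi * Complex.I *
              ((j : ℂ) * ((((∑ i, a i * ((x i : ℕ) : ℤ)) - b : ℤ)) : ℂ) / (m : ℂ))) :=
          Finset.sum_comm
      _ = ∑ x : Fin n → Fin q, z ^ (w x) *
          (if ((m : ℤ) ∣ (∑ i, a i * ((x i : ℕ) : ℤ)) - b) then (m : ℂ) else 0) := by
          refine Finset.sum_congr rfl fun x _ => ?_
          rw [← Finset.mul_sum, exp_sum_div_aux m hm _]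
  rw [hmain, Finset.mul_sum]
  -- Step 3: the right side is the generating sum over the code C
  have hstep3 : ∑ x : Fin n → Fin q, (1 / (m : ℂ)) * (z ^ (w x) *
      (if ((m : ℤ) ∣ (∑ i, a i * ((x i : ℕ) : ℤ)) - b) then (m : ℂ) else 0))
      = ∑ x ∈ C, z ^ (w x) := by
    rw [hC]
    rw [Finset.sum_filter]
    refine Finset.sum_congr rfl fun x _ => ?_
    have hiff : ((∑ i, a i * ((x i : ℕ) : ℤ)) ≡ b [ZMOD (m : ℤ)]) ↔
        ((m : ℤ) ∣ (∑ i, a i * ((x i : ℕ) : ℤ)) - b) := by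
      rw [Int.modEq_iff_dvd]
      exact dvd_sub_comm
    by_cases h : ((m : ℤ) ∣ (∑ i, a i * ((x i : ℕ) : ℤ)) - b)
    · rw [if_pos h, if_pos (hiff.mpr h)]
      field_simp
    · rw [if_neg h, if_neg (fun hc => h (hiff.mp hc))]
      simp
  rw [hstep3]
  -- Step 4: the left side equals the same sum, grouped by weight
  have hmaps : ∀ x ∈ C, w x ∈ Finset.range (n + 1) := by
    intro x _
    simp only [Finset.mem_range, Nat.lt_succ_iff, hw]
    exact (Finset.card_filter_le _ _).trans (by simp)
  rw [← Finset.sum_fiberwise_of_maps_to hmaps (fun x => z ^ (w x))]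
  refine Finset.sum_congr rfl fun i _ => ?_
  rw [hA i]
  have hcc : ∑ x ∈ C.filter (fun x => w x = i), z ^ (w x)
      = ∑ x ∈ C.filter (fun x => w x = i), z ^ i :=
    Finset.sum_congr rfl fun x hx => by rw [(Finset.mem_filter.mp hx).2]
  rw [hcc, Finset.sum_const, nsmul_eq_mul]
end
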